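/- arXiv:2004.13491 — 2 statements merged into one kernel-verified Lean document; each statement's English description precedes it below -/
import Mathlib

section
/- For every temporal graph 𝒢 with lifetime τ, the temporal treewidth ttw(𝒢) (defined as the treewidth of the undirected static expansion) satisfies tw_↓(𝒢) ≤ ttw(𝒢) ≤ (tw_↓(𝒢) + 1)·τ − 1. -/
/-!
Pulling a tree decomposition of the underlying graph back along `(v, t) ↦ v` replaces each bag
`B` by `B × [τ]`: layer edges project to edges of the underlying graph and column edges to a
single vertex, so this is a tree decomposition of the expansion with bags of size `|B| · τ`.
Conversely, pushing a tree decomposition of the expansion forward along the same map gives one of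
the underlying graph, because every column `{v} × [τ]` is a path and the nodes whose bags meet a
connected set form a subtree.
-/

/-- A tree decomposition of a simple graph `G`: a tree `T` with bags `B_u ⊆ V` such that
the bags cover all vertices, every edge is contained in some bag, and for each vertex the
set of tree nodes whose bag contains it induces a connected subtree. -/
structure TreeDecomp {V : Type} (G : SimpleGraph V) : Type 1 where
  ι : Type
  T : SimpleGraph ι
  isTree : T.IsTree
  bags : ι → Set V
  bags_cover : ∀ v : V, ∃ i, v ∈ bags i
  bags_edge : ∀ ⦃v w : V⦄, G.Adj v w → ∃ i, v ∈ bags i ∧ w ∈ bags i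
  bags_subtree : ∀ v : V, (SimpleGraph.induce {i | v ∈ bags i} T).Connected

/-- The width of a tree decomposition: the supremum of bag sizes minus one. -/
noncomputable def TreeDecomp.width {V : Type} {G : SimpleGraph V} (d : TreeDecomp G) : ℕ∞ :=
  ⨆ i, ((d.bags i).encard - 1)

/-- The treewidth of a graph: the minimum width over all tree decompositions. -/
noncomputable def treewidth {V : Type} (G : SimpleGraph V) : ℕ∞ :=
  ⨅ d : TreeDecomp G, d.width

/-- The underlying graph of a temporal graph given by its layers: the union of all layers. -/
def underlying {V : Type} {τ : ℕ} (layers : Fin τ → SimpleGraph V) : SimpleGraph V :=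
  ⨆ i, layers i

/-- The undirected static expansion of a temporal graph: vertices are vertex appearances
`(v, t)`, with layer edges `{(v,t),(w,t)}` for each temporal edge `({v,w},t)` and column
edges `{(v,t),(v,t+1)}`. -/
def expansion {V : Type} {τ : ℕ} (layers : Fin τ → SimpleGraph V) :
    SimpleGraph (V × Fin τ) :=
  SimpleGraph.fromRel (fun p q =>
    (p.2 = q.2 ∧ (layers p.2).Adj p.1 q.1) ∨ (p.1 = q.1 ∧ (p.2 : ℕ) + 1 = (q.2 : ℕ)))

open SimpleGraph

namespace TreeDecomp

variable {V W : Type} {G : SimpleGraph V} {H : SimpleGraph W}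

lemma encard_bags_le_width_add_one (d : TreeDecomp G) (i : d.ι) :
    (d.bags i).encard ≤ d.width + 1 :=
  tsub_le_iff_right.1 (le_iSup (fun i => (d.bags i).encard - 1) i)

def comap (d : TreeDecomp G) (f : W → V)
    (hf : ∀ ⦃p q⦄, H.Adj p q → f p = f q ∨ G.Adj (f p) (f q)) : TreeDecomp H where
  ι := d.ι
  T := d.T
  isTree := d.isTree
  bags i := f ⁻¹' d.bags i
  bags_cover p := d.bags_cover (f p)
  bags_edge p q hpq := by
    rcases hf hpq with heq | hadj
    · obtain ⟨i, hi⟩ := d.bags_cover (f p)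
      exact ⟨i, hi, show f q ∈ d.bags i from heq ▸ hi⟩
    · exact d.bags_edge hadj
  bags_subtree p := d.bags_subtree (f p)

lemma width_comap_fst_le {τ : ℕ} {H : SimpleGraph (V × Fin τ)} (d : TreeDecomp G)
    (hf : ∀ ⦃p q⦄, H.Adj p q → p.1 = q.1 ∨ G.Adj p.1 q.1) :
    (d.comap Prod.fst hf).width ≤ (d.width + 1) * τ - 1 := by
  refine iSup_le fun i => tsub_le_tsub_right ?_ 1
  calc (Prod.fst ⁻¹' d.bags i).encard = (d.bags i).encard * τ := by
        rw [← Set.prod_univ, Set.encard_prod, Set.encard_univ, ENat.card_eq_coe_fintype_card,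
          Fintype.card_fin]
    _ ≤ (d.width + 1) * τ := mul_le_mul_left (d.encard_bags_le_width_add_one i) _

def nodesMeeting (d : TreeDecomp H) (S : Set W) : Set d.ι :=
  {i | (d.bags i ∩ S).Nonempty}

lemma reachable_induce_nodesMeeting_of_mem_bags (d : TreeDecomp H) {S : Set W} {p : W}
    (hp : p ∈ S) {i j : d.ι} (hi : p ∈ d.bags i) (hj : p ∈ d.bags j) :
    (d.T.induce (d.nodesMeeting S)).Reachable ⟨i, p, hi, hp⟩ ⟨j, p, hj, hp⟩ :=
  (d.bags_subtree p ⟨i, hi⟩ ⟨j, hj⟩).map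
    (induceHomOfLE d.T (fun _ hk => ⟨p, hk, hp⟩ : {k | p ∈ d.bags k} ≤ d.nodesMeeting S)).toHom

-- Along a walk in `S`, consecutive vertices share a bag, so the subtrees of its vertices chain up.
lemma connected_induce_nodesMeeting (d : TreeDecomp H) {S : Set W}
    (hS : (H.induce S).Connected) : (d.T.induce (d.nodesMeeting S)).Connected := by
  have hwalk : ∀ {p q : S} (_ : (H.induce S).Walk p q) {i j : d.ι}
      (hi : (p : W) ∈ d.bags i) (hj : (q : W) ∈ d.bags j),
      (d.T.induce (d.nodesMeeting S)).Reachable ⟨i, p, hi, p.2⟩ ⟨j, q, hj, q.2⟩ := by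
    intro _ _ w
    induction w with
    | @nil p =>
      intro i j hi hj
      exact d.reachable_induce_nodesMeeting_of_mem_bags p.2 hi hj
    | @cons p _ _ hadj _ ih =>
      intro i j hi hj
      obtain ⟨k, hk, hk'⟩ := d.bags_edge hadj
      exact (d.reachable_induce_nodesMeeting_of_mem_bags p.2 hi hk).trans (ih hk' hj)
  obtain ⟨p⟩ := hS.nonempty
  obtain ⟨i, hi⟩ := d.bags_cover p
  have : Nonempty (d.nodesMeeting S) := ⟨⟨i, p, hi, p.2⟩⟩
  refine ⟨?_⟩
  rintro ⟨i, p, hip, hp⟩ ⟨j, q, hjq, hq⟩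
  exact hwalk (hS.preconnected ⟨p, hp⟩ ⟨q, hq⟩).some hip hjq

def map (d : TreeDecomp H) (f : W → V)
    (hedge : ∀ ⦃v w⦄, G.Adj v w → ∃ p q, f p = v ∧ f q = w ∧ H.Adj p q)
    (hfiber : ∀ v, (H.induce (f ⁻¹' {v})).Connected) : TreeDecomp G where
  ι := d.ι
  T := d.T
  isTree := d.isTree
  bags i := f '' d.bags i
  bags_cover v := by
    obtain ⟨⟨p, hp⟩⟩ := (hfiber v).nonempty
    obtain ⟨i, hi⟩ := d.bags_cover p
    exact ⟨i, p, hi, hp⟩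
  bags_edge v w hvw := by
    obtain ⟨p, q, rfl, rfl, hpq⟩ := hedge hvw
    obtain ⟨i, hp, hq⟩ := d.bags_edge hpq
    exact ⟨i, ⟨p, hp, rfl⟩, q, hq, rfl⟩
  bags_subtree v := d.connected_induce_nodesMeeting (hfiber v)

lemma width_map_le (d : TreeDecomp H) (f : W → V)
    (hedge : ∀ ⦃v w⦄, G.Adj v w → ∃ p q, f p = v ∧ f q = w ∧ H.Adj p q)
    (hfiber : ∀ v, (H.induce (f ⁻¹' {v})).Connected) :
    (d.map f hedge hfiber).width ≤ d.width :=
  iSup_mono fun i => tsub_le_tsub_right (Set.encard_image_le f (d.bags i)) 1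

def ofBot (V : Type) : TreeDecomp (⊥ : SimpleGraph V) where
  ι := Option V
  T := starGraph none
  isTree := isTree_starGraph none
  bags i := i.elim ∅ singleton
  bags_cover v := ⟨some v, rfl⟩
  bags_edge _ _ h := h.elim
  bags_subtree v := by
    refine (connected_iff_exists_forall_reachable _).2 ⟨⟨some v, rfl⟩, ?_⟩
    rintro ⟨_ | w, hw⟩
    · exact hw.elim
    · obtain rfl : v = w := hw
      rfl

lemma width_ofBot (V : Type) : (ofBot V).width = 0 :=
  nonpos_iff_eq_zero.1 <| iSup_le <| by rintro (_ | v) <;> simp [ofBot]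

end TreeDecomp

-- The star decomposition of the edgeless graph on `Unit`, pulled back, has the bags `∅` and `V`.
instance {V : Type} (G : SimpleGraph V) : Nonempty (TreeDecomp G) :=
  ⟨(TreeDecomp.ofBot Unit).comap (fun _ => ()) fun _ _ _ => Or.inl rfl⟩

lemma exists_width_eq_treewidth {V : Type} (G : SimpleGraph V) :
    ∃ d : TreeDecomp G, d.width = treewidth G :=
  ciInf_mem fun d : TreeDecomp G => d.width

lemma treewidth_bot (V : Type) : treewidth (⊥ : SimpleGraph V) = 0 :=
  nonpos_iff_eq_zero.1 <| (iInf_le _ (TreeDecomp.ofBot V)).trans (TreeDecomp.width_ofBot V).le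

lemma treewidth_le_of_connected_fibers {V W : Type} {G : SimpleGraph V} {H : SimpleGraph W}
    (f : W → V) (hedge : ∀ ⦃v w⦄, G.Adj v w → ∃ p q, f p = v ∧ f q = w ∧ H.Adj p q)
    (hfiber : ∀ v, (H.induce (f ⁻¹' {v})).Connected) : treewidth G ≤ treewidth H :=
  le_iInf fun d => (iInf_le _ (d.map f hedge hfiber)).trans (d.width_map_le f hedge hfiber)

section Temporal

variable {V : Type} {τ : ℕ} (layers : Fin τ → SimpleGraph V)

lemma underlying_adj {v w : V} : (underlying layers).Adj v w ↔ ∃ t, (layers t).Adj v w :=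
  iSup_adj

lemma expansion_adj_of_layer_adj {v w : V} {t : Fin τ} (h : (layers t).Adj v w) :
    (expansion layers).Adj (v, t) (w, t) :=
  (fromRel_adj _ _ _).2 ⟨fun heq => h.ne congr($heq.1), Or.inl (Or.inl ⟨rfl, h⟩)⟩

lemma expansion_adj_of_succ {v : V} {t s : Fin τ} (h : (t : ℕ) + 1 = s) :
    (expansion layers).Adj (v, t) (v, s) :=
  (fromRel_adj _ _ _).2 ⟨fun heq => by simp only [Prod.mk.injEq, Fin.ext_iff] at heq; omega,
    Or.inl (Or.inr ⟨rfl, h⟩)⟩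

lemma fst_eq_or_underlying_adj_of_expansion_adj ⦃p q : V × Fin τ⦄
    (h : (expansion layers).Adj p q) : p.1 = q.1 ∨ (underlying layers).Adj p.1 q.1 := by
  obtain ⟨-, (⟨-, hadj⟩ | ⟨heq, -⟩) | (⟨-, hadj⟩ | ⟨heq, -⟩)⟩ := (fromRel_adj _ _ _).1 h
  · exact Or.inr ((underlying_adj layers).2 ⟨p.2, hadj⟩)
  · exact Or.inl heq
  · exact Or.inr ((underlying_adj layers).2 ⟨q.2, hadj.symm⟩)
  · exact Or.inl heq.symm

lemma connected_induce_fst_preimage_singleton (hτ : 0 < τ) (v : V) :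
    ((expansion layers).induce (Prod.fst ⁻¹' {v})).Connected := by
  obtain ⟨n, rfl⟩ := Nat.exists_eq_add_one_of_ne_zero hτ.ne'
  let column : pathGraph (n + 1) →g (expansion layers).induce (Prod.fst ⁻¹' {v}) :=
    { toFun t := ⟨(v, t), rfl⟩
      map_rel' h := by
        rcases pathGraph_adj.1 h with h | h
        · exact expansion_adj_of_succ layers h
        · exact (expansion_adj_of_succ layers h).symm }
  refine (pathGraph_connected n).map column ?_
  rintro ⟨⟨w, t⟩, rfl⟩
  exact ⟨t, rfl⟩

theorem treewidth_underlying_le_treewidth_expansion :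
    treewidth (underlying layers) ≤ treewidth (expansion layers) := by
  rcases Nat.eq_zero_or_pos τ with rfl | hτ
  · rw [show underlying layers = ⊥ from iSup_of_empty _, treewidth_bot]
    exact zero_le
  · refine treewidth_le_of_connected_fibers Prod.fst (fun v w h => ?_)
      (connected_induce_fst_preimage_singleton layers hτ)
    obtain ⟨t, ht⟩ := (underlying_adj layers).1 h
    exact ⟨(v, t), (w, t), rfl, rfl, expansion_adj_of_layer_adj layers ht⟩

theorem treewidth_expansion_le :
    treewidth (expansion layers) ≤ (treewidth (underlying layers) + 1) * τ - 1 := by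
  obtain ⟨d, hd⟩ := exists_width_eq_treewidth (underlying layers)
  rw [← hd]
  exact (iInf_le _ _).trans
    (d.width_comap_fst_le (fst_eq_or_underlying_adj_of_expansion_adj layers))

end Temporal

/-- the temporal treewidth (treewidth of the undirected static expansion)
satisfies `tw_↓(𝒢) ≤ ttw(𝒢) ≤ (tw_↓(𝒢) + 1)·τ − 1`. -/
theorem temporal_treewidth_bounds {V : Type} {τ : ℕ}
    (layers : Fin τ → SimpleGraph V) :
    treewidth (underlying layers) ≤ treewidth (expansion layers) ∧
      treewidth (expansion layers) ≤
        (treewidth (underlying layers) + 1) * (τ : ℕ∞) - 1 :=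
  ⟨treewidth_underlying_le_treewidth_expansion layers, treewidth_expansion_le layers⟩
end

section
/- If two vertices v and w of a temporal graph are in the same connected component of every layer G₁, …, G_τ, and τ ≥ n − 1 where n = |V|, then there is a strict temporal walk from v to w arriving within at most n − 1 time steps; more precisely, an agent starting at v at time 0 can reach w by time n − 1 by traversing at most one edge per time step. -/
/-!
Let `R t` be the set of vertices an agent starting at `v` can occupy after `t` steps. Staying put
gives `R t ⊆ R (t + 1)`, and if `w ∉ R t` then a walk from `v` to `w` in layer `t` leaves `R t`
along some edge, which the agent can traverse at step `t`; so `R` grows strictly until it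
contains `w`. Hence `w ∈ R t` or `|R t| ≥ t + 1`, and at `t = n - 1` the second alternative
forces `R t = V`.
-/

namespace TemporalGraph

variable {V : Type*} (G : ℕ → SimpleGraph V)

def IsWalk (f : ℕ → V) (t : ℕ) : Prop :=
  ∀ i < t, f (i + 1) = f i ∨ (G i).Adj (f i) (f (i + 1))

def reachSet (v : V) (t : ℕ) : Set V :=
  {x | ∃ f : ℕ → V, f 0 = v ∧ f t = x ∧ IsWalk G f t}

variable {G}

theorem IsWalk.snoc {f : ℕ → V} {t : ℕ} {x : V} (hf : IsWalk G f t)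
    (hx : x = f t ∨ (G t).Adj (f t) x) :
    IsWalk G (fun i => if i ≤ t then f i else x) (t + 1) := by
  intro i hi
  rcases Nat.lt_succ_iff_lt_or_eq.mp hi with hi | rfl
  · simpa [Nat.succ_le_of_lt hi, hi.le] using hf i hi
  · simpa using hx

theorem mem_reachSet_succ {v x y : V} {t : ℕ} (hx : x ∈ reachSet G v t)
    (hy : y = x ∨ (G t).Adj x y) : y ∈ reachSet G v (t + 1) := by
  obtain ⟨f, rfl, rfl, hf⟩ := hx
  exact ⟨_, by simp, by simp, hf.snoc hy⟩

theorem self_mem_reachSet (v : V) (t : ℕ) : v ∈ reachSet G v t :=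
  ⟨fun _ => v, rfl, rfl, fun _ _ => Or.inl rfl⟩

theorem reachSet_subset_succ (v : V) (t : ℕ) : reachSet G v t ⊆ reachSet G v (t + 1) :=
  fun _ hx => mem_reachSet_succ hx (Or.inl rfl)

theorem reachSet_ssubset_succ {v w : V} {t : ℕ} (hvw : (G t).Reachable v w)
    (hw : w ∉ reachSet G v t) : reachSet G v t ⊂ reachSet G v (t + 1) := by
  obtain ⟨p⟩ := hvw
  obtain ⟨d, -, hd_in, hd_out⟩ := p.exists_boundary_dart _ (self_mem_reachSet v t) hw
  exact (Set.ssubset_iff_of_subset (reachSet_subset_succ v t)).mpr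
    ⟨_, mem_reachSet_succ hd_in (Or.inr d.adj), hd_out⟩

theorem mem_reachSet_or_le_ncard [Finite V] {v w : V} {t : ℕ}
    (hvw : ∀ i < t, (G i).Reachable v w) :
    w ∈ reachSet G v t ∨ t + 1 ≤ (reachSet G v t).ncard := by
  induction t with
  | zero => exact .inr ((Set.ncard_pos).mpr ⟨v, self_mem_reachSet v 0⟩)
  | succ t ih =>
    by_cases hw : w ∈ reachSet G v t
    · exact .inl (reachSet_subset_succ v t hw)
    · have hlt := Set.ncard_lt_ncard (reachSet_ssubset_succ (hvw t t.lt_succ_self) hw)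
      have := (ih fun i hi => hvw i (hi.trans t.lt_succ_self)).resolve_left hw
      exact .inr (by omega)

theorem mem_reachSet_card_sub_one [Finite V] {v w : V}
    (hvw : ∀ i < Nat.card V - 1, (G i).Reachable v w) :
    w ∈ reachSet G v (Nat.card V - 1) := by
  refine (mem_reachSet_or_le_ncard hvw).elim id fun hcard => ?_
  have hpos : 0 < Nat.card V := Nat.card_pos_iff.mpr ⟨⟨v⟩, inferInstance⟩
  have huniv : reachSet G v (Nat.card V - 1) = Set.univ :=
    Set.eq_of_subset_of_ncard_le (Set.subset_univ _) (by rw [Set.ncard_univ]; omega)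
  exact huniv ▸ Set.mem_univ w

end TemporalGraph

def extendLayers {V : Type*} {τ : ℕ} (layers : Fin τ → SimpleGraph V) (i : ℕ) : SimpleGraph V :=
  if h : i < τ then layers ⟨i, h⟩ else ⊥

theorem extendLayers_adj {V : Type*} {τ : ℕ} (layers : Fin τ → SimpleGraph V) (i : ℕ)
    (x y : V) : (extendLayers layers i).Adj x y ↔ ∃ h : i < τ, (layers ⟨i, h⟩).Adj x y := by
  unfold extendLayers
  split_ifs with h <;> simp [h]

/-- if `v` and `w` lie in the same connected component of every layer and
`τ ≥ n − 1` with `n = |V|`, then an agent starting at `v` at time 0, traversing at most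
one edge per time step (each step using an edge of the current layer, or waiting), can
reach `w` by time `n − 1`. -/
theorem reach_within_card_steps {V : Type} [Fintype V] {τ : ℕ}
    (layers : Fin τ → SimpleGraph V) (v w : V)
    (hτ : Fintype.card V - 1 ≤ τ)
    (hconn : ∀ t : Fin τ, (layers t).Reachable v w) :
    ∃ f : ℕ → V, f 0 = v ∧ f (Fintype.card V - 1) = w ∧
      ∀ i : ℕ, i < Fintype.card V - 1 →
        f (i + 1) = f i ∨ ∃ h : i < τ, (layers ⟨i, h⟩).Adj (f i) (f (i + 1)) := by
  have hreach : ∀ i < Nat.card V - 1, (extendLayers layers i).Reachable v w := by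
    intro i hi
    rw [Nat.card_eq_fintype_card] at hi
    simpa [extendLayers, show i < τ by omega] using hconn ⟨i, by omega⟩
  obtain ⟨f, hf0, hfw, hf⟩ := TemporalGraph.mem_reachSet_card_sub_one hreach
  rw [Nat.card_eq_fintype_card] at hfw hf
  exact ⟨f, hf0, hfw, fun i hi => (hf i hi).imp_right (extendLayers_adj layers i _ _).mp⟩
end
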